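/- arXiv:1912.01411 — 3 statements merged into one kernel-verified Lean document; each statement's English description precedes it below -/
import Mathlib

section
/- The semi-tensor product of matrices is associative: for any real matrices A, B, C, one has (A ⋉ B) ⋉ C = A ⋉ (B ⋉ C). -/
/-!
Write `M ⊗ I_k` for the Kronecker product with an identity matrix. Because
`(M N) ⊗ I_k = (M ⊗ I_k)(N ⊗ I_k)` and `(M ⊗ I_u) ⊗ I_k = M ⊗ I_{uk}`, both `(A ⋉ B) ⋉ C` and
`A ⋉ (B ⋉ C)` expand to triple products `(A ⊗ I_a)(B ⊗ I_b)(C ⊗ I_c)`, and associativity of the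
ordinary matrix product reduces the theorem to checking that the expansion factors `a, b, c`
coincide on the two sides, which is elementary lcm arithmetic.
-/

open Matrix Kronecker

/-- The semi-tensor product `A ⋉ B = (A ⊗ I_{l/m})(B ⊗ I_{l/p})`, `l = lcm(m,p)`. -/
def stp {n m p q : ℕ} (A : Matrix (Fin n) (Fin m) ℝ) (B : Matrix (Fin p) (Fin q) ℝ) :
    Matrix (Fin (n * (Nat.lcm m p / m))) (Fin (q * (Nat.lcm m p / p))) ℝ :=
  (Matrix.reindex finProdFinEquiv finProdFinEquiv
      (A ⊗ₖ (1 : Matrix (Fin (Nat.lcm m p / m)) (Fin (Nat.lcm m p / m)) ℝ))) *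
  (Matrix.reindex (finProdFinEquiv.trans (finCongr (by
        rw [Nat.mul_div_cancel' (Nat.dvd_lcm_right m p),
          Nat.mul_div_cancel' (Nat.dvd_lcm_left m p)])))
      finProdFinEquiv
      (B ⊗ₖ (1 : Matrix (Fin (Nat.lcm m p / p)) (Fin (Nat.lcm m p / p)) ℝ)))

abbrev stpFactorLeft (m p : ℕ) : ℕ := Nat.lcm m p / m

abbrev stpFactorRight (m p : ℕ) : ℕ := Nat.lcm m p / p

theorem mul_stpFactorLeft (m p : ℕ) : m * stpFactorLeft m p = Nat.lcm m p :=
  Nat.mul_div_cancel' (Nat.dvd_lcm_left m p)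

theorem mul_stpFactorRight (m p : ℕ) : p * stpFactorRight m p = Nat.lcm m p :=
  Nat.mul_div_cancel' (Nat.dvd_lcm_right m p)

-- Both sides equal `lcm (q m) (q p) (p s)`. Multiplied by a suitable positive number, each of the
-- three identities between expansion factors below reduces to this one.
theorem mul_lcm_mul_stpFactorLeft (m p q s : ℕ) :
    q * Nat.lcm m (p * stpFactorLeft q s) = p * Nat.lcm (q * stpFactorRight m p) s := by
  calc q * Nat.lcm m (p * stpFactorLeft q s)
      = Nat.lcm (q * m) (p * Nat.lcm q s) := by
        rw [← Nat.lcm_mul_left, mul_left_comm, mul_stpFactorLeft]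
    _ = Nat.lcm (Nat.lcm (q * m) (q * p)) (p * s) := by
        rw [← Nat.lcm_mul_left, Nat.lcm_assoc, mul_comm p q]
    _ = p * Nat.lcm (q * stpFactorRight m p) s := by
        rw [← Nat.lcm_mul_left, mul_left_comm, mul_stpFactorRight, Nat.lcm_mul_left]

theorem stpFactorLeft_mul_stpFactorLeft (m p q s : ℕ) :
    stpFactorLeft m p * stpFactorLeft (q * stpFactorRight m p) s
      = stpFactorLeft m (p * stpFactorLeft q s) := by
  rcases Nat.eq_zero_or_pos m with rfl | hm
  · simp [stpFactorLeft, stpFactorRight]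
  rcases Nat.eq_zero_or_pos q with rfl | hq
  · simp [stpFactorLeft, stpFactorRight]
  refine Nat.eq_of_mul_eq_mul_left (Nat.mul_pos hq hm) ?_
  linear_combination q * stpFactorLeft (q * stpFactorRight m p) s * mul_stpFactorLeft m p
    - q * stpFactorLeft (q * stpFactorRight m p) s * mul_stpFactorRight m p
    + p * mul_stpFactorLeft (q * stpFactorRight m p) s - mul_lcm_mul_stpFactorLeft m p q s
    - q * mul_stpFactorLeft m (p * stpFactorLeft q s)

theorem stpFactorRight_mul_stpFactorLeft (m p q s : ℕ) :
    stpFactorRight m p * stpFactorLeft (q * stpFactorRight m p) s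
      = stpFactorLeft q s * stpFactorRight m (p * stpFactorLeft q s) := by
  rcases Nat.eq_zero_or_pos p with rfl | hp
  · simp [stpFactorLeft, stpFactorRight]
  rcases Nat.eq_zero_or_pos q with rfl | hq
  · simp [stpFactorLeft, stpFactorRight]
  refine Nat.eq_of_mul_eq_mul_left (Nat.mul_pos hp hq) ?_
  linear_combination p * mul_stpFactorLeft (q * stpFactorRight m p) s
    - mul_lcm_mul_stpFactorLeft m p q s
    - q * mul_stpFactorRight m (p * stpFactorLeft q s)

theorem stpFactorRight_mul_stpFactorRight (m p q s : ℕ) :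
    stpFactorRight q s * stpFactorRight m (p * stpFactorLeft q s)
      = stpFactorRight (q * stpFactorRight m p) s := by
  rcases Nat.eq_zero_or_pos p with rfl | hp
  · simp [stpFactorLeft, stpFactorRight]
  rcases Nat.eq_zero_or_pos s with rfl | hs
  · simp [stpFactorLeft, stpFactorRight]
  refine Nat.eq_of_mul_eq_mul_left (Nat.mul_pos hp hs) ?_
  linear_combination p * stpFactorRight m (p * stpFactorLeft q s) * mul_stpFactorRight q s
    - p * stpFactorRight m (p * stpFactorLeft q s) * mul_stpFactorLeft q s
    + q * mul_stpFactorRight m (p * stpFactorLeft q s)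
    + mul_lcm_mul_stpFactorLeft m p q s
    - p * mul_stpFactorRight (q * stpFactorRight m p) s

theorem Nat.mod_mul_eq_mod_mul_iff {i j k u : ℕ} :
    i % (k * u) = j % (k * u) ↔ i % k = j % k ∧ i / k % u = j / k % u := by
  refine ⟨fun h => ⟨?_, ?_⟩, fun ⟨h₁, h₂⟩ => by rw [Nat.mod_mul, Nat.mod_mul, h₁, h₂]⟩
  · rw [← Nat.mod_mul_right_mod i k u, h, Nat.mod_mul_right_mod]
  · rw [← Nat.mod_mul_right_div_self i k u, h, Nat.mod_mul_right_div_self]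

namespace Matrix

variable {R : Type*}

def CastEq {a b a' b' : ℕ} (M : Matrix (Fin a) (Fin b) R) (N : Matrix (Fin a') (Fin b') R) :
    Prop :=
  ∃ (hr : a' = a) (hc : b' = b), M = N.reindex (finCongr hr) (finCongr hc)

namespace CastEq

variable {a b c a' b' c' a'' b'' : ℕ}

@[refl]
theorem refl (M : Matrix (Fin a) (Fin b) R) : CastEq M M := ⟨rfl, rfl, rfl⟩

theorem of_reindex (M : Matrix (Fin a) (Fin b) R) (hr : a = a') (hc : b = b') :
    CastEq (M.reindex (finCongr hr) (finCongr hc)) M := ⟨hr, hc, rfl⟩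

theorem symm {M : Matrix (Fin a) (Fin b) R} {N : Matrix (Fin a') (Fin b') R} :
    CastEq M N → CastEq N M := by
  rintro ⟨rfl, rfl, rfl⟩
  rfl

theorem trans {M : Matrix (Fin a) (Fin b) R} {N : Matrix (Fin a') (Fin b') R}
    {P : Matrix (Fin a'') (Fin b'') R} : CastEq M N → CastEq N P → CastEq M P := by
  rintro ⟨rfl, rfl, rfl⟩ ⟨rfl, rfl, rfl⟩
  rfl

theorem mul [Mul R] [AddCommMonoid R] {M : Matrix (Fin a) (Fin b) R}
    {N : Matrix (Fin b) (Fin c) R} {M' : Matrix (Fin a') (Fin b') R}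
    {N' : Matrix (Fin b') (Fin c') R} :
    CastEq M M' → CastEq N N' → CastEq (M * N) (M' * N') := by
  rintro ⟨rfl, rfl, rfl⟩ ⟨-, rfl, rfl⟩
  rfl

end CastEq

def kroneckerOne [MulZeroOneClass R] (k : ℕ) {a b : ℕ} (M : Matrix (Fin a) (Fin b) R) :
    Matrix (Fin (a * k)) (Fin (b * k)) R :=
  reindex finProdFinEquiv finProdFinEquiv (M ⊗ₖ (1 : Matrix (Fin k) (Fin k) R))

section kroneckerOne

variable {a b c : ℕ}

theorem kroneckerOne_apply [MulZeroOneClass R] (k : ℕ) (M : Matrix (Fin a) (Fin b) R)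
    (i : Fin (a * k)) (j : Fin (b * k)) :
    kroneckerOne k M i j = if i.modNat = j.modNat then M i.divNat j.divNat else 0 := by
  simp [kroneckerOne, one_apply]

theorem kroneckerOne_mul [CommSemiring R] (k : ℕ) (M : Matrix (Fin a) (Fin b) R)
    (N : Matrix (Fin b) (Fin c) R) :
    kroneckerOne k (M * N) = kroneckerOne k M * kroneckerOne k N := by
  rw [kroneckerOne, kroneckerOne, kroneckerOne, ← mul_one (1 : Matrix (Fin k) (Fin k) R),
    mul_kronecker_mul, reindex_apply, reindex_apply, reindex_apply, submatrix_mul_equiv]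
  simp

theorem CastEq.kroneckerOne [MulZeroOneClass R] (k : ℕ) {a' b' : ℕ}
    {M : Matrix (Fin a) (Fin b) R} {M' : Matrix (Fin a') (Fin b') R} :
    CastEq M M' → CastEq (M.kroneckerOne k) (M'.kroneckerOne k) := by
  rintro ⟨rfl, rfl, rfl⟩
  rfl

theorem castEq_kroneckerOne_of_eq [MulZeroOneClass R] {k k' : ℕ} (h : k = k')
    (M : Matrix (Fin a) (Fin b) R) : CastEq (M.kroneckerOne k) (M.kroneckerOne k') := by
  subst h
  rfl

theorem castEq_kroneckerOne_kroneckerOne [MulZeroOneClass R] {k u v : ℕ} (h : u * k = v)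
    (M : Matrix (Fin a) (Fin b) R) :
    CastEq ((M.kroneckerOne u).kroneckerOne k) (M.kroneckerOne v) := by
  subst h
  rw [mul_comm u k]
  refine ⟨by ring, by ring, ?_⟩
  ext i j
  simp only [reindex_apply, submatrix_apply, finCongr_symm, finCongr_apply, kroneckerOne_apply,
    Fin.ext_iff, Fin.coe_modNat, Fin.val_cast, Nat.mod_mul_eq_mod_mul_iff, ite_and]
  congr 3 <;> ext <;> simp [Nat.div_div_eq_div_mul]

end kroneckerOne

end Matrix

-- The product in `stp` elaborates to `CStarMatrix` multiplication (its dimension proof is a tactic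
-- block, so the default instance fires); the two products agree only after unfolding, entrywise.
theorem stp_eq_mul_reindex {n m p q : ℕ} (A : Matrix (Fin n) (Fin m) ℝ)
    (B : Matrix (Fin p) (Fin q) ℝ) :
    stp A B = A.kroneckerOne (stpFactorLeft m p) *
      (B.kroneckerOne (stpFactorRight m p)).reindex
        (finCongr ((mul_stpFactorRight m p).trans (mul_stpFactorLeft m p).symm))
        (finCongr rfl) := by
  ext i j
  rfl

/-- The semi-tensor product is associative: `(A ⋉ B) ⋉ C = A ⋉ (B ⋉ C)`
(the two sides have equal dimensions, and agree up to the corresponding cast). -/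
theorem stp_assoc {n m p q s t : ℕ}
    (A : Matrix (Fin n) (Fin m) ℝ) (B : Matrix (Fin p) (Fin q) ℝ)
    (C : Matrix (Fin s) (Fin t) ℝ) :
    ∃ (hr : _ = _) (hc : _ = _),
      stp (stp A B) C = (stp A (stp B C)).reindex (finCongr hr) (finCongr hc) := by
  rw [stp_eq_mul_reindex (stp A B), stp_eq_mul_reindex A B, kroneckerOne_mul, Matrix.mul_assoc,
    stp_eq_mul_reindex A (stp B C), stp_eq_mul_reindex B C, kroneckerOne_mul]
  refine CastEq.mul ?_ ((CastEq.mul ?_ ?_).trans (CastEq.of_reindex _ _ _).symm)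
  · exact castEq_kroneckerOne_kroneckerOne (stpFactorLeft_mul_stpFactorLeft m p q s) A
  · exact ((CastEq.of_reindex _ _ _).kroneckerOne _).trans <|
      (castEq_kroneckerOne_kroneckerOne (stpFactorRight_mul_stpFactorLeft m p q s) B).trans
        (castEq_kroneckerOne_kroneckerOne rfl B).symm
  · exact (CastEq.of_reindex _ _ _).trans <|
      (castEq_kroneckerOne_of_eq (stpFactorRight_mul_stpFactorRight m p q s).symm C).trans <|
        (castEq_kroneckerOne_kroneckerOne rfl C).symm.trans
          ((CastEq.of_reindex _ _ _).kroneckerOne _).symm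
end

section
/- If the interaction digraph of a Boolean network on n nodes is acyclic, then the network converges in at most n steps: F^n is constant, where F is the global update map. -/
/-!
Rank each node by the number of its ancestors in the interaction digraph. Acyclicity makes the
rank strictly increase along every edge, and no node is its own ancestor, so every rank is below
`n`. By induction on `t`, coordinate `j` of `F^[t] x` no longer depends on `x` once `t` exceeds
the rank of `j`: the update `f_j` only reads coordinates of smaller rank.
-/

/-- `f` depends (essentially) on variable `i`. -/
def BoolDependsOn {n : ℕ} (f : (Fin n → Bool) → Bool) (i : Fin n) : Prop :=
  ∃ x y : Fin n → Bool, (∀ j : Fin n, j ≠ i → x j = y j) ∧ f x ≠ f y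

section BoolDependsOn

variable {n : ℕ} (f : (Fin n → Bool) → Bool)

theorem apply_update_eq_of_boolDependsOn_imp {x : Fin n → Bool} {i : Fin n} {b : Bool}
    (h : BoolDependsOn f i → x i = b) : f (Function.update x i b) = f x := by
  by_cases hi : BoolDependsOn f i
  · rw [← h hi, Function.update_eq_self]
  · by_contra hne
    exact hi ⟨_, x, fun j hj => Function.update_of_ne hj _ _, hne⟩

theorem eq_of_forall_boolDependsOn {x y : Fin n → Bool}
    (h : ∀ i, BoolDependsOn f i → x i = y i) : f x = f y := by
  classical
  suffices key : ∀ (s : Finset (Fin n)) (x : Fin n → Bool),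
      (∀ i, BoolDependsOn f i → x i = y i) → (∀ i ∉ s, x i = y i) → f x = f y from
    key Finset.univ x h fun i hi => absurd (Finset.mem_univ i) hi
  intro s
  induction s using Finset.induction_on with
  | empty => exact fun x _ hxy => congrArg f (funext fun i => hxy i (Finset.notMem_empty i))
  | @insert a s _ ih =>
    intro x hdep hxy
    have hupdate : ∀ i, (i ≠ a → x i = y i) → Function.update x a (y a) i = y i := by
      intro i hi
      rcases eq_or_ne i a with rfl | hia
      · exact Function.update_self ..
      · rw [Function.update_of_ne hia, hi hia]
    rw [← apply_update_eq_of_boolDependsOn_imp f (hdep a)]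
    exact ih _ (fun i hi => hupdate i fun _ => hdep i hi)
      (fun i hi => hupdate i fun hia => hxy i (by simp [hia, hi]))

end BoolDependsOn

section Ancestors

open Relation

variable {α : Type*} {R : α → α → Prop}

theorem ncard_transGen_lt_of_rel [Finite α] (hacyc : ∀ v, ¬TransGen R v v) {i j : α}
    (hij : R i j) : {k | TransGen R k i}.ncard < {k | TransGen R k j}.ncard :=
  Set.ncard_lt_ncard ⟨fun _ hk => hk.tail hij, fun hsub => hacyc i (hsub (TransGen.single hij))⟩

theorem ncard_transGen_lt_card [Finite α] (hacyc : ∀ v, ¬TransGen R v v) (j : α) :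
    {k | TransGen R k j}.ncard < Nat.card α :=
  Set.ncard_lt_card fun huniv => hacyc j (Set.eq_univ_iff_forall.mp huniv j)

end Ancestors

theorem iterate_apply_eq_of_rank_lt {n : ℕ} (F : (Fin n → Bool) → (Fin n → Bool))
    (rank : Fin n → ℕ)
    (hrank : ∀ i j, BoolDependsOn (fun x => F x j) i → rank i < rank j)
    {t : ℕ} {j : Fin n} (hj : rank j < t) (x y : Fin n → Bool) :
    F^[t] x j = F^[t] y j := by
  induction t generalizing j with
  | zero => omega
  | succ t ih =>
    rw [Function.iterate_succ_apply', Function.iterate_succ_apply']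
    exact eq_of_forall_boolDependsOn (fun z => F z j) fun i hi =>
      ih (by have := hrank i j hi; omega)

/-- If the interaction digraph of a Boolean network on `n` nodes is acyclic (no
directed cycles, no self-loops), then the network converges in at most `n` steps:
`F^[n]` is constant. -/
theorem acyclic_converges_in_n_steps {n : ℕ} (F : (Fin n → Bool) → (Fin n → Bool))
    (hacyc : ∀ v : Fin n,
      ¬ Relation.TransGen (fun i j : Fin n => BoolDependsOn (fun x => F x j) i) v v) :
    ∃ c : Fin n → Bool, ∀ x : Fin n → Bool, F^[n] x = c := by
  refine ⟨F^[n] fun _ => false, fun x => funext fun j => ?_⟩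
  refine iterate_apply_eq_of_rank_lt F _ (fun _ _ => ncard_transGen_lt_of_rel hacyc) ?_ x _
  simpa using ncard_transGen_lt_card hacyc j
end

section
/- If a map F : {0,1}^n → {0,1}^n has an acyclic interaction digraph, then F has exactly one fixed point x*, and x* can be computed coordinate-wise along a topological order of the digraph: for a source node i (no in-edges), f_i is constant and x*_i equals that constant; for each subsequent node j, x*_j = f_j(values of x* at in-neighbors of j). -/
open Function

section WellFoundedFixedPoint

variable {ι α : Type*} {r : ι → ι → Prop} {F : (ι → α) → ι → α}

theorem eq_of_fixedPoint_of_wellFounded (hr : WellFounded r)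
    (hloc : ∀ j y z, (∀ i, r i j → y i = z i) → F y j = F z j)
    {x y : ι → α} (hx : F x = x) (hy : F y = y) : x = y := by
  funext j
  induction j using hr.induction with
  | _ j ih => rw [← hx, ← hy]; exact hloc j x y ih

theorem exists_fixedPoint_of_wellFounded [Inhabited α] (hr : WellFounded r)
    (hloc : ∀ j y z, (∀ i, r i j → y i = z i) → F y j = F z j) :
    ∃ x : ι → α, F x = x := by
  classical
  let x : ι → α := hr.fix fun j x => F (fun i => if h : r i j then x i h else default) j
  have hx : ∀ j, x j = F (fun i => if r i j then x i else default) j := hr.fix_eq _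
  refine ⟨x, funext fun j => ?_⟩
  rw [hx j]
  exact hloc j _ _ fun i hi => by simp [hi]

theorem existsUnique_fixedPoint_of_wellFounded [Inhabited α] (hr : WellFounded r)
    (hloc : ∀ j y z, (∀ i, r i j → y i = z i) → F y j = F z j) :
    ∃! x : ι → α, F x = x :=
  let ⟨x, hx⟩ := exists_fixedPoint_of_wellFounded hr hloc
  ⟨x, hx, fun _ hy => eq_of_fixedPoint_of_wellFounded hr hloc hy hx⟩

end WellFoundedFixedPoint

theorem wellFounded_of_not_transGen_self {α : Type*} [Finite α] {r : α → α → Prop}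
    (h : ∀ a, ¬ Relation.TransGen r a a) : WellFounded r :=
  haveI : Std.Irrefl (Relation.TransGen r) := ⟨h⟩
  (Finite.wellFounded_of_trans_of_irrefl (Relation.TransGen r)).mono
    fun _ _ => Relation.TransGen.single

section BoolDependsOn

variable {n : ℕ} {f : (Fin n → Bool) → Bool}

theorem apply_update_of_not_boolDependsOn {i : Fin n} (h : ¬ BoolDependsOn f i)
    (x : Fin n → Bool) (b : Bool) : f (update x i b) = f x :=
  not_ne_iff.mp fun hne => h ⟨update x i b, x, fun _ hj => update_of_ne hj _ _, hne⟩

theorem eq_of_forall_boolDependsOn_imp_eq {y z : Fin n → Bool}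
    (h : ∀ i, BoolDependsOn f i → y i = z i) : f y = f z := by
  classical
  -- Switch the coordinates from `y` to `z` one at a time.
  suffices hs : ∀ s : Finset (Fin n), f (s.piecewise z y) = f y by
    simpa using (hs Finset.univ).symm
  intro s
  induction s using Finset.induction_on with
  | empty => simp
  | insert a s ha ih =>
    rw [Finset.piecewise_insert, ← ih]
    by_cases hdep : BoolDependsOn f a
    · rw [update_eq_self_iff.mpr (by rw [Finset.piecewise_eq_of_notMem _ _ _ ha, h a hdep])]
    · exact apply_update_of_not_boolDependsOn hdep _ _

end BoolDependsOn

/-- If `F : {0,1}ⁿ → {0,1}ⁿ` has an acyclic interaction digraph, then `F` has exactly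
one fixed point `x*`, computable coordinate-wise along a topological order: the
coordinate function of a source node is constant, and `x*_j = f_j` evaluated at any
state agreeing with `x*` on the in-neighbors of `j`. -/
theorem acyclic_unique_fixed_point {n : ℕ} (F : (Fin n → Bool) → (Fin n → Bool))
    (hacyc : ∀ v : Fin n,
      ¬ Relation.TransGen (fun i j : Fin n => BoolDependsOn (fun x => F x j) i) v v) :
    (∃! xs : Fin n → Bool, F xs = xs) ∧
    (∀ j : Fin n, (∀ i : Fin n, ¬ BoolDependsOn (fun x => F x j) i) →
      ∀ y z : Fin n → Bool, F y j = F z j) ∧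
    (∀ xs : Fin n → Bool, F xs = xs → ∀ (j : Fin n) (y : Fin n → Bool),
      (∀ i : Fin n, BoolDependsOn (fun x => F x j) i → y i = xs i) → F y j = xs j) :=
  ⟨existsUnique_fixedPoint_of_wellFounded (wellFounded_of_not_transGen_self hacyc)
      fun _ _ _ => eq_of_forall_boolDependsOn_imp_eq,
    fun _ hsrc _ _ => eq_of_forall_boolDependsOn_imp_eq fun i hi => absurd hi (hsrc i),
    fun _ hxs j _ hy => (eq_of_forall_boolDependsOn_imp_eq hy).trans (congrFun hxs j)⟩
end
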